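/- arXiv:1701.06423 — 3 statements merged into one kernel-verified Lean document; each statement's English description precedes it below -/
import Mathlib

section
/- Fix integers k, p, q, K with max{0, p+q−K} ≤ k ≤ min{p,q}. Define S(k) as the set of permutations σ of {1,…,K} such that the cardinality of σ({p−k+1,…,p−k+q}) ∩ {1,…,p} equals k. Then |S(k)| = C(q,k)·C(p,k)·k!·((K−q)!·(K−p)!)/((K−(q+p−k))!). -/
/-!
Group the permutations `σ` by the `q`-set `C = σ(A)`, where `A = {p - k + 1, …, p - k + q}`.
Every `q`-set is the image of `A` under exactly `q! (K - q)!` permutations (a bijection `A → C`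
together with one between the complements), and the `q`-sets meeting `B = {1, …, p}` in exactly
`k` points number `C(p, k) C(K - p, q - k)`. The stated formula is this product, since
`(K - p)! / (K - p - (q - k))! = C(K - p, q - k) (q - k)!`.
-/

open Finset Nat

namespace Equiv.Perm
variable {α : Type*}

def subtypeCongrEquiv (p q : α → Prop) [DecidablePred p] [DecidablePred q] :
    {σ : Perm α // ∀ x, p x ↔ q (σ x)} ≃
      ({x // p x} ≃ {x // q x}) × ({x // ¬p x} ≃ {x // ¬q x}) where
  toFun σ := (σ.1.subtypeEquiv σ.2, σ.1.subtypeEquiv fun x => not_congr (σ.2 x))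
  invFun ef := ⟨ef.1.subtypeCongr ef.2, fun x => by
    by_cases hx : p x
    · simp [Equiv.subtypeCongr, hx, (ef.1 ⟨x, hx⟩).2]
    · simp [Equiv.subtypeCongr, hx, (ef.2 ⟨x, hx⟩).2]⟩
  left_inv σ := by ext x; by_cases hx : p x <;> simp [Equiv.subtypeCongr, hx]
  right_inv ef := by ext ⟨x, hx⟩ <;> simp [Equiv.subtypeCongr, hx]

variable [Fintype α] [DecidableEq α]

theorem card_filter_image_eq {A C : Finset α} (h : #A = #C) :
    #{σ : Perm α | A.image σ = C} = (#A)! * (Fintype.card α - #A)! := by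
  have hiff (σ : Perm α) : A.image σ = C ↔ ∀ x, x ∈ A ↔ σ x ∈ C := by
    rw [image_eq_iff_eq_preimage σ.bijective, Finset.ext_iff]
    simp
  simp_rw [hiff]
  rw [← Fintype.card_subtype, Fintype.card_congr (subtypeCongrEquiv _ _), Fintype.card_prod,
    Fintype.card_equiv (Fintype.equivOfCardEq ?_), Fintype.card_equiv (Fintype.equivOfCardEq ?_)]
  all_goals simp_all [Fintype.card_subtype_compl]

theorem card_filter_pred_image (A : Finset α) (P : Finset α → Prop) [DecidablePred P] :
    #{σ : Perm α | P (A.image σ)} =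
      #{C ∈ powersetCard #A univ | P C} * ((#A)! * (Fintype.card α - #A)!) := by
  rw [card_eq_sum_card_fiberwise (f := fun σ : Perm α => A.image σ)
    (t := {C ∈ powersetCard #A univ | P C}), sum_const_nat]
  · intro C hC
    rw [mem_filter, mem_powersetCard_univ] at hC
    rw [filter_filter, ← card_filter_image_eq hC.1.symm]
    congr 1
    ext σ
    simp only [mem_filter, mem_univ, true_and]
    exact ⟨And.right, fun h => ⟨h ▸ hC.2, h⟩⟩
  · intro σ hσ
    simp only [coe_filter, mem_univ, true_and, Set.mem_ofPred_eq] at hσ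
    simp [hσ, card_image_of_injective _ σ.injective]

end Equiv.Perm

theorem Finset.card_filter_powersetCard_card_inter {α : Type*} [Fintype α] [DecidableEq α]
    (B : Finset α) {q k : ℕ} (hk : k ≤ q) :
    #{C ∈ powersetCard q univ | #(C ∩ B) = k} = (#B).choose k * (#Bᶜ).choose (q - k) := by
  have split {S T : Finset α} (hSB : S ⊆ B) (hTB : T ⊆ Bᶜ) :
      (S ∪ T) ∩ B = S ∧ (S ∪ T) \ B = T := by
    have hTB' : Disjoint T B := subset_compl_iff_disjoint_right.1 hTB
    rw [union_inter_distrib_right, inter_eq_left.2 hSB, disjoint_iff_inter_eq_empty.1 hTB',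
      union_empty, union_sdiff_distrib, sdiff_eq_empty_iff_subset.2 hSB, hTB'.sdiff_eq_left,
      empty_union]
    exact ⟨rfl, rfl⟩
  rw [← card_powersetCard, ← card_powersetCard, ← card_product]
  refine card_nbij' (fun C => (C ∩ B, C \ B)) (fun P => P.1 ∪ P.2) ?_ ?_ ?_ ?_
  · intro C hC
    simp only [mem_coe, mem_filter, mem_product, mem_powersetCard] at hC ⊢
    have := card_sdiff_add_card_inter C B
    exact ⟨⟨inter_subset_right, hC.2⟩, fun x hx => mem_compl.2 (mem_sdiff.1 hx).2, by omega⟩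
  · rintro ⟨S, T⟩ hP
    simp only [mem_coe, mem_filter, mem_product, mem_powersetCard] at hP ⊢
    obtain ⟨⟨hSB, hS⟩, hTB, hT⟩ := hP
    rw [card_union_of_disjoint (disjoint_compl_right.mono hSB hTB), (split hSB hTB).1]
    exact ⟨⟨subset_univ _, by omega⟩, hS⟩
  · intro C _
    exact sup_inf_sdiff C B
  · rintro ⟨S, T⟩ hP
    simp only [mem_coe, mem_product, mem_powersetCard] at hP
    obtain ⟨h1, h2⟩ := split hP.1.1 hP.2.1
    exact Prod.ext h1 h2

theorem Fin.card_filter_le_val_lt {n a b : ℕ} (hb : b ≤ n) :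
    #{i : Fin n | a ≤ i ∧ i < b} = b - a := by
  rw [← Nat.card_Ico, ← card_map valEmbedding]
  congr 1
  ext m
  simp only [mem_map, mem_filter, mem_univ, true_and, valEmbedding_apply, mem_Ico]
  exact ⟨fun ⟨i, hi, him⟩ => him ▸ hi, fun hm => ⟨⟨m, by omega⟩, hm, rfl⟩⟩

theorem card_permutation_intersection_class_general (k p q K : ℕ)
    (hlow : p + q - K ≤ k) (hkp : k ≤ p) (hkq : k ≤ q) :
    ((Finset.univ : Finset (Equiv.Perm (Fin K))).filter (fun σ : Equiv.Perm (Fin K) =>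
        (((Finset.univ.filter (fun i : Fin K => p - k ≤ (i : ℕ) ∧ (i : ℕ) < p - k + q)).image
              (⇑σ)) ∩ Finset.univ.filter (fun i : Fin K => (i : ℕ) < p)).card = k)).card
      = q.choose k * p.choose k * k.factorial *
          ((K - q).factorial * ((K - p).factorial / (K - (q + p - k)).factorial)) := by
  set A : Finset (Fin K) := {i | p - k ≤ (i : ℕ) ∧ (i : ℕ) < p - k + q}
  set B : Finset (Fin K) := {i | (i : ℕ) < p}
  have hA : #A = q := by
    rw [Fin.card_filter_le_val_lt (by omega)]; omega
  have hB : #B = p := by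
    rw [Fin.card_filter_val_lt]; omega
  rw [Equiv.Perm.card_filter_pred_image A (fun C => #(C ∩ B) = k), hA,
    card_filter_powersetCard_card_inter B hkq, card_compl, hB, Fintype.card_fin,
    show K - (q + p - k) = K - p - (q - k) by omega, ← descFactorial_eq_div (by omega),
    descFactorial_eq_factorial_mul_choose, ← choose_mul_factorial_mul_factorial hkq]
  ring

/-- Cardinality of the set `S(k)` of permutations `σ` of `{1,…,K}` such that
`σ({p−k+1,…,p−k+q}) ∩ {1,…,p}` has exactly `k` elements (indices written `0`-based,
so `{1,…,p}` becomes `{i : i < p}` and `{p−k+1,…,p−k+q}` becomes `{i : p−k ≤ i < p−k+q}`):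
`|S(k)| = C(q,k)·C(p,k)·k!·(K−q)!·(K−p)!/(K−(q+p−k))!`. -/
theorem card_permutation_intersection_class (k p q K : ℕ)
    (hpK : p ≤ K) (hqK : q ≤ K) (hlow : p + q - K ≤ k) (hkp : k ≤ p) (hkq : k ≤ q) :
    ((Finset.univ : Finset (Equiv.Perm (Fin K))).filter (fun σ : Equiv.Perm (Fin K) =>
        (((Finset.univ.filter (fun i : Fin K => p - k ≤ (i : ℕ) ∧ (i : ℕ) < p - k + q)).image
              (⇑σ)) ∩ Finset.univ.filter (fun i : Fin K => (i : ℕ) < p)).card = k)).card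
      = q.choose k * p.choose k * k.factorial *
          ((K - q).factorial * ((K - p).factorial / (K - (q + p - k)).factorial)) :=
  card_permutation_intersection_class_general k p q K hlow hkp hkq
end

section
/- Fix integers k, p, q, K with max{0, p+q−K} ≤ k ≤ min{p,q}, and let σ be a permutation of {1,…,K} such that |σ({p−k+1,…,p−k+q}) ∩ {1,…,p}| = k. Then σ can be factored as σ = σ⁽¹⁾σ⁽²⁾σ⁽³⁾σ⁽⁴⁾ where σ⁽¹⁾ is a permutation supported on {1,…,p}, σ⁽²⁾ on {p+1,…,K}, σ⁽³⁾ on {p−k+1,…,p−k+q}, and σ⁽⁴⁾ on {1,…,K}∖{p−k+1,…,p−k+q}. -/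
/-!
Let `A = {i < p}` and `B = {p - k ≤ i < p - k + q}`. The hypothesis says that `σ⁻¹ A` meets `B` in as
many points as `A` does; since both sets have `p` elements, they also meet the complement of `B`
in equally many points. Hence some `ρ` preserving `B` carries `σ⁻¹ A` onto `A`, and then
`τ = σ ρ⁻¹` preserves `A`. A permutation preserving a set is the product of its restrictions to
the set and to the complement, which splits `τ = σ₁ σ₂` and `ρ = σ₃ σ₄`.
-/

open Equiv Finset

theorem Fintype.card_subtype_and_add_card_subtype_not_and {α : Type*} [Fintype α]
    (R P : α → Prop) [DecidablePred R] [DecidablePred P] :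
    Fintype.card {x // R x ∧ P x} + Fintype.card {x // ¬R x ∧ P x} =
      Fintype.card {x // P x} := by
  simp only [Fintype.card_subtype]
  rw [← card_filter_add_card_filter_not (s := univ.filter P) R, filter_filter, filter_filter]
  simp only [and_comm]

theorem Fin.card_filter_le_val_and_val_lt {n a b : ℕ} (hb : b ≤ n) :
    #{i : Fin n | a ≤ (i : ℕ) ∧ (i : ℕ) < b} = b - a := by
  rw [← Nat.card_Ico, ← card_map Fin.valEmbedding]
  congr 1
  ext m
  simp only [mem_map, mem_filter, mem_univ, true_and, Fin.valEmbedding_apply, mem_Ico]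
  exact ⟨fun ⟨i, hi, him⟩ => him ▸ hi, fun hm => ⟨⟨m, by omega⟩, hm, rfl⟩⟩

namespace Equiv.Perm

theorem exists_eq_mul_of_forall_iff {α : Type*} {P : α → Prop} [DecidablePred P]
    {τ : Perm α} (h : ∀ x, P (τ x) ↔ P x) :
    ∃ τ₁ τ₂ : Perm α, (∀ x, ¬P x → τ₁ x = x) ∧ (∀ x, P x → τ₂ x = x) ∧ τ = τ₁ * τ₂ := by
  have h' : ∀ x, ¬P (τ x) ↔ ¬P x := fun x => (h x).not
  refine ⟨ofSubtype (τ.subtypePerm h), ofSubtype (τ.subtypePerm h'),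
    fun x hx => ofSubtype_apply_of_not_mem _ hx,
    fun x hx => ofSubtype_apply_of_not_mem (p := fun x => ¬P x) _ (not_not_intro hx), ?_⟩
  ext x
  by_cases hx : P x
  · rw [mul_apply, ofSubtype_subtypePerm_of_not_mem (p := fun x => ¬P x) h' (not_not_intro hx),
      ofSubtype_subtypePerm_of_mem h hx]
  · rw [mul_apply, ofSubtype_subtypePerm_of_mem (p := fun x => ¬P x) h' hx,
      ofSubtype_subtypePerm_of_not_mem h ((h' x).mpr hx)]

variable {α : Type*} [Fintype α]

theorem exists_forall_iff_of_card_eq {P Q : α → Prop} [DecidablePred P] [DecidablePred Q]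
    (h : Fintype.card {x // P x} = Fintype.card {x // Q x}) :
    ∃ π : Perm α, ∀ x, Q (π x) ↔ P x := by
  have hc : Fintype.card {x // ¬P x} = Fintype.card {x // ¬Q x} := by
    rw [Fintype.card_subtype_compl, Fintype.card_subtype_compl, h]
  refine ⟨Equiv.subtypeCongr (Fintype.equivOfCardEq h) (Fintype.equivOfCardEq hc),
    fun x => ?_⟩
  by_cases hx : P x
  · simpa [Equiv.subtypeCongr, sumCompl_symm_apply_of_pos hx, hx] using
      (Fintype.equivOfCardEq h ⟨x, hx⟩).2
  · simpa [Equiv.subtypeCongr, sumCompl_symm_apply_of_neg hx, hx] using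
      (Fintype.equivOfCardEq hc ⟨x, hx⟩).2

theorem exists_forall_iff_and_iff_of_card_eq {R P Q : α → Prop}
    [DecidablePred R] [DecidablePred P] [DecidablePred Q]
    (hPQ : Fintype.card {x // P x} = Fintype.card {x // Q x})
    (hR : Fintype.card {x // R x ∧ P x} = Fintype.card {x // R x ∧ Q x}) :
    ∃ ρ : Perm α, ∀ x, (R (ρ x) ↔ R x) ∧ (Q (ρ x) ↔ P x) := by
  have hR' : Fintype.card {x // ¬R x ∧ P x} = Fintype.card {x // ¬R x ∧ Q x} := by
    have := Fintype.card_subtype_and_add_card_subtype_not_and R P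
    have := Fintype.card_subtype_and_add_card_subtype_not_and R Q
    omega
  obtain ⟨ρ₁, hρ₁⟩ := exists_forall_iff_of_card_eq
    (P := fun y : {x // R x} => P y) (Q := fun y => Q y)
    (by simpa only [Fintype.card_congr (subtypeSubtypeEquivSubtypeInter R _)] using hR)
  obtain ⟨ρ₂, hρ₂⟩ := exists_forall_iff_of_card_eq
    (P := fun y : {x // ¬R x} => P y) (Q := fun y => Q y)
    (by simpa only [Fintype.card_congr (subtypeSubtypeEquivSubtypeInter (¬R ·) _)] using hR')
  refine ⟨ρ₁.subtypeCongr ρ₂, fun x => ?_⟩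
  by_cases hx : R x
  · rw [subtypeCongr.left_apply _ _ hx]
    exact ⟨iff_of_true (ρ₁ ⟨x, hx⟩).2 hx, hρ₁ ⟨x, hx⟩⟩
  · rw [subtypeCongr.right_apply _ _ hx]
    exact ⟨iff_of_false (ρ₂ ⟨x, hx⟩).2 hx, hρ₂ ⟨x, hx⟩⟩

variable [DecidableEq α]

theorem exists_eq_mul_of_card_image_inter (s t : Finset α) (σ : Perm α)
    (h : #(t.image σ ∩ s) = #(t ∩ s)) :
    ∃ τ ρ : Perm α, (∀ x, τ x ∈ s ↔ x ∈ s) ∧ (∀ x, ρ x ∈ t ↔ x ∈ t) ∧ σ = τ * ρ := by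
  have hinter : Fintype.card {x // x ∈ t ∧ σ x ∈ s} = Fintype.card {x // x ∈ t ∧ x ∈ s} :=
    calc Fintype.card {x // x ∈ t ∧ σ x ∈ s} = #(t.filter (σ · ∈ s)) := by
          rw [Fintype.card_subtype]; congr 1; ext; simp
      _ = #(t.image σ ∩ s) := by
          rw [← filter_mem_eq_inter, filter_image, card_image_of_injective _ σ.injective]
      _ = #(t ∩ s) := h
      _ = Fintype.card {x // x ∈ t ∧ x ∈ s} := by
          rw [Fintype.card_subtype]; congr 1; ext; simp
  obtain ⟨ρ, hρ⟩ := exists_forall_iff_and_iff_of_card_eq (R := (· ∈ t)) (Q := (· ∈ s))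
    (by convert Fintype.card_congr (σ.subtypeEquiv fun _ => Iff.rfl)) hinter
  refine ⟨σ * ρ⁻¹, ρ, fun x => ?_, fun x => (hρ x).1, (inv_mul_cancel_right σ ρ).symm⟩
  simpa using (hρ (ρ⁻¹ x)).2.symm

end Equiv.Perm

theorem permutation_factorization_general (k p q K : ℕ)
    (hpK : p ≤ K) (hkp : k ≤ p) (hkq : k ≤ q)
    (σ : Equiv.Perm (Fin K))
    (hσ : (((Finset.univ.filter (fun i : Fin K => p - k ≤ (i : ℕ) ∧ (i : ℕ) < p - k + q)).image
          (⇑σ)) ∩ Finset.univ.filter (fun i : Fin K => (i : ℕ) < p)).card = k) :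
    ∃ σ₁ σ₂ σ₃ σ₄ : Equiv.Perm (Fin K),
      (∀ i : Fin K, ¬ (i : ℕ) < p → σ₁ i = i) ∧
      (∀ i : Fin K, (i : ℕ) < p → σ₂ i = i) ∧
      (∀ i : Fin K, ¬ (p - k ≤ (i : ℕ) ∧ (i : ℕ) < p - k + q) → σ₃ i = i) ∧
      (∀ i : Fin K, (p - k ≤ (i : ℕ) ∧ (i : ℕ) < p - k + q) → σ₄ i = i) ∧
      σ = σ₁ * σ₂ * σ₃ * σ₄ := by
  set A := univ.filter fun i : Fin K => (i : ℕ) < p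
  set B := univ.filter fun i : Fin K => p - k ≤ (i : ℕ) ∧ (i : ℕ) < p - k + q
  have hBA : #(B ∩ A) = k := by
    have hBA_eq : B ∩ A = univ.filter fun i : Fin K => p - k ≤ (i : ℕ) ∧ (i : ℕ) < p := by
      ext i; simp only [A, B, mem_inter, mem_filter, mem_univ, true_and]; omega
    rw [hBA_eq, Fin.card_filter_le_val_and_val_lt hpK]
    omega
  obtain ⟨τ, ρ, hτ, hρ, rfl⟩ := Perm.exists_eq_mul_of_card_image_inter A B σ (hσ.trans hBA.symm)
  obtain ⟨σ₁, σ₂, h₁, h₂, rfl⟩ := Perm.exists_eq_mul_of_forall_iff hτ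
  obtain ⟨σ₃, σ₄, h₃, h₄, rfl⟩ := Perm.exists_eq_mul_of_forall_iff hρ
  exact ⟨σ₁, σ₂, σ₃, σ₄, fun i hi => h₁ i (by simpa [A] using hi),
    fun i hi => h₂ i (by simpa [A] using hi), fun i hi => h₃ i (by simpa [B] using hi),
    fun i hi => h₄ i (by simpa [B] using hi), (mul_assoc _ _ _).symm⟩

/-- Factorization of a permutation `σ` of `{1,…,K}` (written `0`-based on `Fin K`) with
`|σ({p−k+1,…,p−k+q}) ∩ {1,…,p}| = k` as `σ = σ¹σ²σ³σ⁴` with `σ¹` supported on `{1,…,p}`,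
`σ²` on `{p+1,…,K}`, `σ³` on `{p−k+1,…,p−k+q}` and `σ⁴` on the complement of the latter. -/
theorem permutation_factorization (k p q K : ℕ)
    (hpK : p ≤ K) (hqK : q ≤ K) (hlow : p + q - K ≤ k) (hkp : k ≤ p) (hkq : k ≤ q)
    (σ : Equiv.Perm (Fin K))
    (hσ : (((Finset.univ.filter (fun i : Fin K => p - k ≤ (i : ℕ) ∧ (i : ℕ) < p - k + q)).image
          (⇑σ)) ∩ Finset.univ.filter (fun i : Fin K => (i : ℕ) < p)).card = k) :
    ∃ σ₁ σ₂ σ₃ σ₄ : Equiv.Perm (Fin K),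
      (∀ i : Fin K, ¬ (i : ℕ) < p → σ₁ i = i) ∧
      (∀ i : Fin K, (i : ℕ) < p → σ₂ i = i) ∧
      (∀ i : Fin K, ¬ (p - k ≤ (i : ℕ) ∧ (i : ℕ) < p - k + q) → σ₃ i = i) ∧
      (∀ i : Fin K, (p - k ≤ (i : ℕ) ∧ (i : ℕ) < p - k + q) → σ₄ i = i) ∧
      σ = σ₁ * σ₂ * σ₃ * σ₄ :=
  permutation_factorization_general k p q K hpK hkp hkq σ hσ
end

section
/- Let b̃ ∈ L(S_±^p Z^{⊗p}; S_±^q Z^{⊗q}) and define the Wick operator b̃^{Wick} on the finite-particle subspace by b̃^{Wick}|_{S_±^{n+p}Z^{⊗(n+p)}} = ε^{(p+q)/2}·(√((n+p)!(n+q)!)/n!)·S_±^{n+q}(b̃⊗Id^{⊗n})S_±^{n+p,*}. Then (b̃^{Wick})* = (b̃*)^{Wick}, and if p = q then b̃ ≥ 0 if and only if b̃^{Wick} ≥ 0. -/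
open scoped InnerProductSpace BigOperators

noncomputable section

/-- The sign `s_±(σ)`: `1` in the bosonic case, the signature in the fermionic case. -/
def permSign (fermionic : Bool) {n : ℕ} (σ : Equiv.Perm (Fin n)) : ℂ :=
  if fermionic then ((Equiv.Perm.sign σ : ℤ) : ℂ) else 1

/-- An abstract bosonic (`fermionic = false`) or fermionic (`fermionic = true`) Fock space
over a one-particle Hilbert space `Z`: the completed Hilbert tensor powers `TP n = Z^{⊗n}`
with their elementary tensors and permutation actions, the operators `b ⊗ Id^{⊗n}`, and
the full Fock space `Γ_±(Z)` together with the (anti)symmetrized embeddings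
`J n = S_±ⁿ : Z^{⊗n} → Γ_±(Z)` with mutually orthogonal ranges spanning a dense subspace. -/
structure FockFramework (fermionic : Bool) (Z : Type) [NormedAddCommGroup Z]
    [InnerProductSpace ℂ Z] [CompleteSpace Z] where
  /-- the completed `n`-fold Hilbert tensor power `Z^{⊗n}` -/
  TP : ℕ → Type
  [instTPGroup : ∀ n, NormedAddCommGroup (TP n)]
  [instTPInner : ∀ n, InnerProductSpace ℂ (TP n)]
  [instTPComplete : ∀ n, CompleteSpace (TP n)]
  /-- the elementary tensors `f₁ ⊗ ⋯ ⊗ f_n` -/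
  tvec : ∀ n, (Fin n → Z) → TP n
  tvec_inner : ∀ (n) (f g : Fin n → Z),
    ⟪tvec n f, tvec n g⟫_ℂ = ∏ i, ⟪f i, g i⟫_ℂ
  tvec_add : ∀ (n) (f : Fin n → Z) (i : Fin n) (y z : Z),
    tvec n (Function.update f i (y + z))
      = tvec n (Function.update f i y) + tvec n (Function.update f i z)
  tvec_smul : ∀ (n) (f : Fin n → Z) (i : Fin n) (c : ℂ) (y : Z),
    tvec n (Function.update f i (c • y)) = c • tvec n (Function.update f i y)
  tvec_dense : ∀ n, Dense (↑(Submodule.span ℂ (Set.range (tvec n))) : Set (TP n))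
  /-- the permutation action on `Z^{⊗n}` -/
  permAct : ∀ n, Equiv.Perm (Fin n) → (TP n →L[ℂ] TP n)
  permAct_tvec : ∀ (n) (σ : Equiv.Perm (Fin n)) (f : Fin n → Z),
    permAct n σ (tvec n f) = tvec n (f ∘ σ)
  /-- the operator `b ⊗ Id^{⊗n} : Z^{⊗(p+n)} → Z^{⊗(q+n)}` for `b : Z^{⊗p} → Z^{⊗q}` -/
  opTensorId : ∀ (p q n : ℕ), (TP p →L[ℂ] TP q) → (TP (p + n) →L[ℂ] TP (q + n))
  opTensorId_apply : ∀ (p q n : ℕ) (b : TP p →L[ℂ] TP q)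
      (f : Fin (q + n) → Z) (g : Fin (p + n) → Z),
    ⟪tvec (q + n) f, opTensorId p q n b (tvec (p + n) g)⟫_ℂ =
      ⟪tvec q (fun i => f (Fin.castAdd n i)), b (tvec p (fun i => g (Fin.castAdd n i)))⟫_ℂ *
        ∏ j : Fin n, ⟪f (Fin.natAdd q j), g (Fin.natAdd p j)⟫_ℂ
  /-- the full Fock space `Γ_±(Z)` -/
  Fock : Type
  [instFockGroup : NormedAddCommGroup Fock]
  [instFockInner : InnerProductSpace ℂ Fock]
  [instFockComplete : CompleteSpace Fock]
  /-- `J n x` is the `n`-particle vector `S_±ⁿ x` inside the Fock space -/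
  J : ∀ n, TP n →L[ℂ] Fock
  J_inner : ∀ (n) (x y : TP n),
    ⟪J n x, J n y⟫_ℂ =
      ⟪(n.factorial : ℂ)⁻¹ • ∑ σ : Equiv.Perm (Fin n), permSign fermionic σ • permAct n σ x,
       (n.factorial : ℂ)⁻¹ • ∑ σ : Equiv.Perm (Fin n), permSign fermionic σ • permAct n σ y⟫_ℂ
  J_orth : ∀ (m n : ℕ), m ≠ n → ∀ (x : TP m) (y : TP n), ⟪J m x, J n y⟫_ℂ = 0
  J_dense : Dense (↑(Submodule.span ℂ (⋃ n, Set.range (J n))) : Set Fock)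

attribute [instance] FockFramework.instTPGroup FockFramework.instTPInner
  FockFramework.instTPComplete FockFramework.instFockGroup FockFramework.instFockInner
  FockFramework.instFockComplete

variable {Z : Type} [NormedAddCommGroup Z] [InnerProductSpace ℂ Z] [CompleteSpace Z]
  {fermionic : Bool}

/-- The (anti)symmetrization projection `S_±ⁿ = (1/n!) Σ_σ s_±(σ) σ·` on `Z^{⊗n}`. -/
def FockFramework.symProj (F : FockFramework fermionic Z) (n : ℕ) : F.TP n →L[ℂ] F.TP n :=
  (n.factorial : ℂ)⁻¹ • ∑ σ : Equiv.Perm (Fin n), permSign fermionic σ • F.permAct n σ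

/-- `W` is the `ε`-dependent Wick quantization `b^{Wick}` of
`b ∈ L(S_±^p Z^{⊗p}; S_±^q Z^{⊗q})`, i.e. on the `(n+p)`-particle sector
`b^{Wick} = ε^{(p+q)/2} (√((n+p)!(n+q)!)/n!) S_±^{n+q} (b ⊗ Id^{⊗n}) S_±^{n+p,*}`,
and `W` vanishes on the sectors with fewer than `p` particles. -/
def IsWickOp (F : FockFramework fermionic Z) (ε : ℝ) (p q : ℕ)
    (b : F.TP p →L[ℂ] F.TP q) (W : F.Fock →L[ℂ] F.Fock) : Prop :=
  (∀ (n : ℕ) (x : F.TP (p + n)),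
      W (F.J (p + n) x) =
        ((ε ^ (((p + q : ℕ) : ℝ) / 2) *
            (Real.sqrt (((p + n).factorial * (q + n).factorial : ℕ)) / n.factorial) : ℝ) : ℂ) •
          F.J (q + n) (F.opTensorId p q n b (F.symProj (p + n) x))) ∧
  (∀ m : ℕ, m < p → ∀ x : F.TP m, W (F.J m x) = 0)

/-- `T` is trace class with trace `t`:  for some Hilbert basis the norms `‖T e_i‖` are
summable, and for every Hilbert basis the diagonal matrix elements sum to `t`. -/
def HasTraceVal {H : Type} [NormedAddCommGroup H] [InnerProductSpace ℂ H]
    (T : H →L[ℂ] H) (t : ℂ) : Prop :=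
  (∃ (ι : Type) (bas : HilbertBasis ι ℂ H), Summable fun i => ‖T (bas i)‖) ∧
  (∀ (ι : Type) (bas : HilbertBasis ι ℂ H), HasSum (fun i => ⟪bas i, T (bas i)⟫_ℂ) t)

/-!
On the sector `Z^{⊗(p+n)}` the Wick operator is `wickCoeff ε p q n` times the compression of
`b ⊗ Id^{⊗n}` between symmetrized vectors, and it maps that sector into `Z^{⊗(q+n)}` only. Since
`(b ⊗ Id)^* = b^* ⊗ Id` and the coefficient is symmetric in `p, q`, the matrix elements of
`(b^{Wick})^*` and `(b^*)^{Wick}` agree between vectors of the total set `⋃ₙ ran Jₙ`.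
If `b ≥ 0`, write `b = a^* a`: on a combination of elementary tensors the quadratic form of
`b ⊗ Id` is that of the Hadamard product of two Gram matrices, nonnegative by the Schur product
theorem. Hence `b^{Wick}` is nonnegative on the finite-particle vectors, whose sectors it does not
mix, and by density everywhere. Conversely, as `b = S_± b S_±`, the compression `J_p^* b^{Wick} J_p`
of `b^{Wick}` to the `p`-particle sector is a positive multiple of `b`.
-/

open scoped ComplexOrder

section

variable {E F : Type*} [NormedAddCommGroup E] [InnerProductSpace ℂ E]
  [NormedAddCommGroup F] [InnerProductSpace ℂ F]

theorem ContinuousLinearMap.ext_inner_of_dense_span {A B : E →L[ℂ] F} {s : Set E} {t : Set F}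
    (hs : Dense (Submodule.span ℂ s : Set E)) (ht : Dense (Submodule.span ℂ t : Set F))
    (h : ∀ x ∈ s, ∀ y ∈ t, ⟪A x, y⟫_ℂ = ⟪B x, y⟫_ℂ) : A = B :=
  ext_on hs fun x hx => ext_inner_right ℂ fun y =>
    DFunLike.congr_fun (ext_on (f := innerSL ℂ (A x)) (g := innerSL ℂ (B x)) ht (h x hx)) y

end

theorem Submodule.exists_finset_sum_of_mem_span_iUnion_range {R N ι : Type*} {M : ι → Type*}
    [Semiring R] [AddCommMonoid N] [Module R N] [∀ i, AddCommMonoid (M i)] [∀ i, Module R (M i)]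
    (f : ∀ i, M i →ₗ[R] N) {u : N} (hu : u ∈ span R (⋃ i, Set.range (f i))) :
    ∃ (s : Finset ι) (v : ∀ i, M i), u = ∑ i ∈ s, f i (v i) := by
  classical
  have hrange : ∀ i, span R (Set.range (f i)) = LinearMap.range (f i) :=
    fun i => span_eq (LinearMap.range (f i))
  simp_rw [span_iUnion, hrange] at hu
  obtain ⟨g, hg, rfl⟩ := (mem_iSup_iff_exists_finsupp _ _).mp hu
  choose v hv using hg
  exact ⟨g.support, v, Finset.sum_congr rfl fun i _ => (hv i).symm⟩

namespace Matrix

theorem star_dotProduct_inner_mulVec {E ι : Type*} [NormedAddCommGroup E]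
    [InnerProductSpace ℂ E] [Fintype ι] (v w : ι → E) (x y : ι → ℂ) :
    star x ⬝ᵥ (of fun i j => ⟪v i, w j⟫_ℂ) *ᵥ y = ⟪∑ i, x i • v i, ∑ j, y j • w j⟫_ℂ := by
  simp_rw [sum_inner, inner_sum, inner_smul_left, inner_smul_right, dotProduct, mulVec,
    dotProduct, Finset.mul_sum, Pi.star_apply, of_apply, RCLike.star_def]
  exact Finset.sum_congr rfl fun i _ => Finset.sum_congr rfl fun j _ => by ring

end Matrix

theorem permSign_mul (b : Bool) {n : ℕ} (σ τ : Equiv.Perm (Fin n)) :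
    permSign b (σ * τ) = permSign b σ * permSign b τ := by
  cases b <;> simp [permSign]

theorem permSign_inv (b : Bool) {n : ℕ} (σ : Equiv.Perm (Fin n)) :
    permSign b σ⁻¹ = permSign b σ := by
  cases b <;> simp [permSign]

theorem permSign_mul_self (b : Bool) {n : ℕ} (σ : Equiv.Perm (Fin n)) :
    permSign b σ * permSign b σ = 1 := by
  cases b <;> simp [permSign, ← Int.cast_mul, ← Units.val_mul]

theorem conj_permSign (b : Bool) {n : ℕ} (σ : Equiv.Perm (Fin n)) :
    starRingEnd ℂ (permSign b σ) = permSign b σ := by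
  cases b <;> simp [permSign]

namespace FockFramework

variable (F : FockFramework fermionic Z)

theorem permAct_permAct (n : ℕ) (σ τ : Equiv.Perm (Fin n)) (x : F.TP n) :
    F.permAct n σ (F.permAct n τ x) = F.permAct n (τ * σ) x := by
  suffices (F.permAct n σ).comp (F.permAct n τ) = F.permAct n (τ * σ) from
    DFunLike.congr_fun this x
  refine ContinuousLinearMap.ext_on (F.tvec_dense n) ?_
  rintro _ ⟨f, rfl⟩
  simp only [ContinuousLinearMap.comp_apply, F.permAct_tvec]
  rfl

theorem adjoint_permAct (n : ℕ) (σ : Equiv.Perm (Fin n)) :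
    ContinuousLinearMap.adjoint (F.permAct n σ) = F.permAct n σ⁻¹ := by
  refine ContinuousLinearMap.ext_inner_of_dense_span (F.tvec_dense n) (F.tvec_dense n) ?_
  rintro _ ⟨f, rfl⟩ _ ⟨g, rfl⟩
  rw [ContinuousLinearMap.adjoint_inner_left, F.permAct_tvec, F.permAct_tvec, F.tvec_inner,
    F.tvec_inner]
  simpa using Equiv.prod_comp σ fun i => ⟪f (σ⁻¹ i), g i⟫_ℂ

theorem inner_permAct_left (n : ℕ) (σ : Equiv.Perm (Fin n)) (x y : F.TP n) :
    ⟪F.permAct n σ x, y⟫_ℂ = ⟪x, F.permAct n σ⁻¹ y⟫_ℂ := by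
  rw [← F.adjoint_permAct, ContinuousLinearMap.adjoint_inner_right]

theorem symProj_apply (n : ℕ) (x : F.TP n) :
    F.symProj n x =
      (n.factorial : ℂ)⁻¹ • ∑ σ : Equiv.Perm (Fin n), permSign fermionic σ • F.permAct n σ x := by
  simp [symProj]

theorem inner_symProj_left (n : ℕ) (x y : F.TP n) :
    ⟪F.symProj n x, y⟫_ℂ = ⟪x, F.symProj n y⟫_ℂ := by
  simp only [symProj_apply, inner_smul_left, inner_smul_right, sum_inner, inner_sum, map_inv₀,
    map_natCast, conj_permSign, inner_permAct_left]
  congr 1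
  exact Fintype.sum_equiv (Equiv.inv _) _ _ fun σ => by simp [permSign_inv]

theorem permAct_symProj (n : ℕ) (σ : Equiv.Perm (Fin n)) (x : F.TP n) :
    F.permAct n σ (F.symProj n x) = permSign fermionic σ • F.symProj n x := by
  have hsum : ∑ τ, permSign fermionic τ • F.permAct n σ (F.permAct n τ x) =
      permSign fermionic σ • ∑ τ, permSign fermionic τ • F.permAct n τ x := by
    rw [Finset.smul_sum]
    refine Fintype.sum_equiv (Equiv.mulRight σ) _ _ fun τ => ?_
    rw [permAct_permAct, Equiv.coe_mulRight, smul_smul, permSign_mul, ← mul_assoc,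
      mul_comm _ (permSign _ τ), mul_assoc, permSign_mul_self, mul_one]
  simp only [symProj_apply, map_smul, map_sum, hsum]
  exact smul_comm _ _ _

theorem symProj_symProj (n : ℕ) (x : F.TP n) : F.symProj n (F.symProj n x) = F.symProj n x := by
  conv_lhs => rw [F.symProj_apply]
  simp_rw [F.permAct_symProj, smul_smul, permSign_mul_self, one_smul, Finset.sum_const,
    Finset.card_univ, Fintype.card_perm, Fintype.card_fin, ← Nat.cast_smul_eq_nsmul ℂ, smul_smul]
  rw [inv_mul_cancel₀ (mod_cast n.factorial_ne_zero), one_smul]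

theorem inner_J_J (n : ℕ) (x y : F.TP n) : ⟪F.J n x, F.J n y⟫_ℂ = ⟪x, F.symProj n y⟫_ℂ := by
  rw [F.J_inner, ← F.symProj_apply, ← F.symProj_apply, inner_symProj_left, symProj_symProj]

theorem adjoint_opTensorId (p q n : ℕ) (b : F.TP p →L[ℂ] F.TP q) :
    ContinuousLinearMap.adjoint (F.opTensorId p q n b) =
      F.opTensorId q p n (ContinuousLinearMap.adjoint b) := by
  refine ContinuousLinearMap.ext_inner_of_dense_span (F.tvec_dense (q + n))
    (F.tvec_dense (p + n)) ?_
  rintro _ ⟨f, rfl⟩ _ ⟨g, rfl⟩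
  rw [ContinuousLinearMap.adjoint_inner_left, F.opTensorId_apply]
  conv_rhs => rw [← inner_conj_symm, F.opTensorId_apply]
  rw [map_mul, map_prod, inner_conj_symm, ContinuousLinearMap.adjoint_inner_left]
  simp only [inner_conj_symm]

theorem opTensorId_zero (p q : ℕ) (b : F.TP p →L[ℂ] F.TP q) : F.opTensorId p q 0 b = b := by
  refine ContinuousLinearMap.ext_inner_of_dense_span (F.tvec_dense p) (F.tvec_dense q) ?_
  rintro _ ⟨f, rfl⟩ _ ⟨g, rfl⟩
  rw [← inner_conj_symm, ← inner_conj_symm (b _)]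
  congr 1
  exact (F.opTensorId_apply p q 0 b g f).trans (by simp)

open Matrix in
theorem isPositive_opTensorId {p : ℕ} (n : ℕ) {b : F.TP p →L[ℂ] F.TP p} (hb : b.IsPositive) :
    (F.opTensorId p p n b).IsPositive := by
  have hsa : IsSelfAdjoint (F.opTensorId p p n b) := by
    rw [ContinuousLinearMap.isSelfAdjoint_iff', adjoint_opTensorId, hb.isSelfAdjoint.adjoint_eq]
  refine (ContinuousLinearMap.isPositive_iff' _).mpr ⟨hsa, fun w => ?_⟩
  rw [← ContinuousLinearMap.adjoint_inner_right, hsa.adjoint_eq]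
  obtain ⟨a, hab⟩ := CStarAlgebra.nonneg_iff_eq_star_mul_self.mp
    ((ContinuousLinearMap.nonneg_iff_isPositive b).mpr hb)
  refine (F.tvec_dense (p + n)).induction (P := fun w => 0 ≤ ⟪w, F.opTensorId p p n b w⟫_ℂ)
    (fun w hw => ?_) (isClosed_le continuous_const (by fun_prop)) w
  obtain ⟨N, c, g, rfl⟩ := Submodule.mem_span_set'.mp hw
  choose f hf using fun i => (g i).2
  simp only [← hf, map_sum, map_smul]
  rw [← star_dotProduct_inner_mulVec]
  have hentries : (of fun i j =>
        ⟪F.tvec (p + n) (f i), F.opTensorId p p n b (F.tvec (p + n) (f j))⟫_ℂ) =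
      gram ℂ (fun i => a (F.tvec p fun k => f i (Fin.castAdd n k))) ⊙
        gram ℂ (fun i => F.tvec n fun k => f i (Fin.natAdd p k)) := by
    ext i j
    rw [of_apply, F.opTensorId_apply, hab, hadamard_apply, gram_apply, gram_apply, F.tvec_inner,
      ContinuousLinearMap.star_eq_adjoint, mul_apply_eq_comp,
      ContinuousLinearMap.adjoint_inner_right]
  rw [hentries]
  exact ((posSemidef_gram ℂ _).hadamard (posSemidef_gram ℂ _)).dotProduct_mulVec_nonneg c

end FockFramework

def wickCoeff (ε : ℝ) (p q n : ℕ) : ℝ :=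
  ε ^ (((p + q : ℕ) : ℝ) / 2) *
    (Real.sqrt (((p + n).factorial * (q + n).factorial : ℕ)) / n.factorial)

theorem wickCoeff_comm (ε : ℝ) (p q n : ℕ) : wickCoeff ε q p n = wickCoeff ε p q n := by
  rw [wickCoeff, wickCoeff, Nat.add_comm q p, Nat.mul_comm]

theorem wickCoeff_pos {ε : ℝ} (hε : 0 < ε) (p q n : ℕ) : 0 < wickCoeff ε p q n := by
  unfold wickCoeff
  have := (p + n).factorial_pos
  have := (q + n).factorial_pos
  have := n.factorial_pos
  positivity

namespace IsWickOp

variable {F : FockFramework fermionic Z} {ε : ℝ} {p : ℕ}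

section

variable {q : ℕ} {b : F.TP p →L[ℂ] F.TP q} {W : F.Fock →L[ℂ] F.Fock}

theorem apply_J (hW : IsWickOp F ε p q b W) (n : ℕ) (x : F.TP (p + n)) :
    W (F.J (p + n) x) =
      (wickCoeff ε p q n : ℂ) • F.J (q + n) (F.opTensorId p q n b (F.symProj (p + n) x)) :=
  hW.1 n x

theorem inner_J_apply_J (hW : IsWickOp F ε p q b W) (n : ℕ) (y : F.TP (q + n))
    (x : F.TP (p + n)) :
    ⟪F.J (q + n) y, W (F.J (p + n) x)⟫_ℂ =
      wickCoeff ε p q n *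
        ⟪F.symProj (q + n) y, F.opTensorId p q n b (F.symProj (p + n) x)⟫_ℂ := by
  rw [hW.apply_J, inner_smul_right, F.inner_J_J, F.inner_symProj_left]

theorem inner_J_apply_J_eq_zero (hW : IsWickOp F ε p q b W) {k m : ℕ}
    (hkm : p ≤ m → k + p ≠ m + q) (y : F.TP k) (x : F.TP m) : ⟪F.J k y, W (F.J m x)⟫_ℂ = 0 := by
  rcases lt_or_ge m p with hm | hm
  · rw [hW.2 m hm x, inner_zero_right]
  · obtain ⟨n, rfl⟩ := Nat.exists_eq_add_of_le hm
    rw [hW.apply_J, inner_smul_right, F.J_orth k (q + n) (by omega), mul_zero]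

theorem adjoint_eq {W' : F.Fock →L[ℂ] F.Fock} (hW : IsWickOp F ε p q b W)
    (hW' : IsWickOp F ε q p (ContinuousLinearMap.adjoint b) W') :
    ContinuousLinearMap.adjoint W = W' := by
  refine (ContinuousLinearMap.ext_inner_of_dense_span F.J_dense F.J_dense ?_).symm
  simp only [Set.mem_iUnion, Set.mem_range]
  rintro _ ⟨m, y, rfl⟩ _ ⟨k, x, rfl⟩
  rw [ContinuousLinearMap.adjoint_inner_left, ← inner_conj_symm]
  by_cases hdiag : p ≤ k ∧ k + q = m + p
  · obtain ⟨n, rfl⟩ := Nat.exists_eq_add_of_le hdiag.1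
    obtain rfl : m = q + n := by omega
    rw [hW'.inner_J_apply_J, hW.inner_J_apply_J, ← F.adjoint_opTensorId,
      ContinuousLinearMap.adjoint_inner_right, map_mul, Complex.conj_ofReal, inner_conj_symm,
      wickCoeff_comm]
  · rw [hW'.inner_J_apply_J_eq_zero (by omega), hW.inner_J_apply_J_eq_zero (by omega), map_zero]

theorem adjoint_J_comp_comp_J (hW : IsWickOp F ε p q b W)
    (hb : b = (F.symProj q).comp (b.comp (F.symProj p))) :
    (ContinuousLinearMap.adjoint (F.J q)).comp (W.comp (F.J p)) =
      (wickCoeff ε p q 0 : ℂ) • b := by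
  ext x
  refine ext_inner_left ℂ fun y => ?_
  have hbx : F.symProj (q + 0) (b (F.symProj (p + 0) x)) = b x := (DFunLike.congr_fun hb x).symm
  rw [ContinuousLinearMap.comp_apply, ContinuousLinearMap.comp_apply,
    ContinuousLinearMap.adjoint_inner_right]
  refine (hW.inner_J_apply_J 0 y x).trans ?_
  rw [F.opTensorId_zero, F.inner_symProj_left, hbx, smul_apply, inner_smul_right]

end

variable {b : F.TP p →L[ℂ] F.TP p} {W : F.Fock →L[ℂ] F.Fock}

theorem inner_J_apply_J_nonneg (hW : IsWickOp F ε p p b W) (hε : 0 < ε) (hb : b.IsPositive)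
    (k : ℕ) (x : F.TP k) : 0 ≤ ⟪F.J k x, W (F.J k x)⟫_ℂ := by
  rcases lt_or_ge k p with hk | hk
  · rw [hW.2 k hk x, inner_zero_right]
  · obtain ⟨n, rfl⟩ := Nat.exists_eq_add_of_le hk
    rw [hW.inner_J_apply_J]
    exact mul_nonneg (Complex.zero_le_real.mpr (wickCoeff_pos hε p p n).le)
      ((F.isPositive_opTensorId n hb).inner_nonneg_right _)

theorem isPositive (hW : IsWickOp F ε p p b W) (hε : 0 < ε) (hb : b.IsPositive) :
    W.IsPositive := by
  have hsa : IsSelfAdjoint W := hW.adjoint_eq (by rwa [hb.isSelfAdjoint.adjoint_eq])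
  refine (ContinuousLinearMap.isPositive_iff' W).mpr ⟨hsa, fun u => ?_⟩
  rw [← ContinuousLinearMap.adjoint_inner_right, hsa.adjoint_eq]
  refine F.J_dense.induction (P := fun u => 0 ≤ ⟪u, W u⟫_ℂ) (fun u hu => ?_)
    (isClosed_le continuous_const (by fun_prop)) u
  obtain ⟨s, v, rfl⟩ := Submodule.exists_finset_sum_of_mem_span_iUnion_range
    (fun n => (F.J n : F.TP n →ₗ[ℂ] F.Fock)) hu
  simp only [ContinuousLinearMap.coe_coe, map_sum, sum_inner, inner_sum]
  refine Finset.sum_nonneg fun k hk => ?_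
  rw [Finset.sum_eq_single_of_mem k hk fun m _ hmk => hW.inner_J_apply_J_eq_zero (by omega) _ _]
  exact hW.inner_J_apply_J_nonneg hε hb k (v k)

theorem isPositive_iff (hW : IsWickOp F ε p p b W) (hε : 0 < ε)
    (hb : b = (F.symProj p).comp (b.comp (F.symProj p))) : b.IsPositive ↔ W.IsPositive := by
  refine ⟨hW.isPositive hε, fun hWpos => ?_⟩
  have hC := wickCoeff_pos hε p p 0
  have hCb : ((wickCoeff ε p p 0 : ℂ) • b).IsPositive :=
    hW.adjoint_J_comp_comp_J hb ▸ hWpos.adjoint_conj (F.J p)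
  have := hCb.smul_of_nonneg (c := ((wickCoeff ε p p 0)⁻¹ : ℝ))
    (Complex.zero_le_real.mpr (inv_nonneg.mpr hC.le))
  rwa [smul_smul, ← Complex.ofReal_mul, inv_mul_cancel₀ hC.ne', Complex.ofReal_one, one_smul]
    at this

end IsWickOp

theorem wick_adjoint_and_positivity_general
    (F : FockFramework fermionic Z) (ε : ℝ) (hε : 0 < ε) (p q : ℕ)
    (b : F.TP p →L[ℂ] F.TP q)
    (W W' : F.Fock →L[ℂ] F.Fock)
    (hW : IsWickOp F ε p q b W)
    (hW' : IsWickOp F ε q p (ContinuousLinearMap.adjoint b) W')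
    (b₂ : F.TP p →L[ℂ] F.TP p)
    (hb₂ : b₂ = (F.symProj p).comp (b₂.comp (F.symProj p)))
    (W₂ : F.Fock →L[ℂ] F.Fock)
    (hW₂ : IsWickOp F ε p p b₂ W₂) :
    ContinuousLinearMap.adjoint W = W' ∧ (b₂.IsPositive ↔ W₂.IsPositive) :=
  ⟨hW.adjoint_eq hW', hW₂.isPositive_iff hε hb₂⟩

/-- For `b ∈ L(S_±^p Z^{⊗p}; S_±^q Z^{⊗q})`, the Wick quantization
`b^{Wick}|_{S_±^{n+p}Z^{⊗(n+p)}} = ε^{(p+q)/2}(√((n+p)!(n+q)!)/n!) S_±^{n+q}(b⊗Id^{⊗n})S_±^{n+p,*}`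
satisfies `(b^{Wick})* = (b*)^{Wick}`; moreover, for `p = q`, `b ≥ 0` if and only if
`b^{Wick} ≥ 0`. -/
theorem wick_adjoint_and_positivity
    (F : FockFramework fermionic Z) (ε : ℝ) (hε : 0 < ε) (p q : ℕ)
    (b : F.TP p →L[ℂ] F.TP q)
    (hb : b = (F.symProj q).comp (b.comp (F.symProj p)))
    (W W' : F.Fock →L[ℂ] F.Fock)
    (hW : IsWickOp F ε p q b W)
    (hW' : IsWickOp F ε q p (ContinuousLinearMap.adjoint b) W')
    (b₂ : F.TP p →L[ℂ] F.TP p)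
    (hb₂ : b₂ = (F.symProj p).comp (b₂.comp (F.symProj p)))
    (W₂ : F.Fock →L[ℂ] F.Fock)
    (hW₂ : IsWickOp F ε p p b₂ W₂) :
    ContinuousLinearMap.adjoint W = W' ∧ (b₂.IsPositive ↔ W₂.IsPositive) :=
  wick_adjoint_and_positivity_general F ε hε p q b W W' hW hW' b₂ hb₂ W₂ hW₂

end
end
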